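/- arXiv:2510.18414 — 3 statements merged into one kernel-verified Lean document; each statement's English description precedes it below -/
import Mathlib

section
/- Let n ≥ 1 and let ω = (ω_1,…,ω_n) ∈ {0,…,9}^n satisfy D_n(ω) ≡ 0 (mod 2^n) and ω_1 ∈ {2,4,6,8}. Then there exists k ≥ n with D_n(ω) ≡ 2^k (mod 10^n), i.e., ω ∈ Ω_n. -/
/-!
Reading off the last digit, `D_n(ω) ≡ ω₁ (mod 10)`, so `D_n(ω)` is prime to 5. Since `2` has order
4 modulo 5 and `2 ^ 4 = 1 + 5 · 3` has order `5 ^ (n - 1)` modulo `5 ^ n`, the class of `2` generates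
`(ℤ/5ⁿ)ˣ`; hence `2 ^ k ≡ D_n(ω) (mod 5ⁿ)` for arbitrarily large `k`. For `k ≥ n` the congruence
also holds modulo `2ⁿ`, as both sides vanish there, and the Chinese remainder theorem concludes.
-/

open scoped Classical

noncomputable def Dn (n : ℕ) (x : Fin n → Fin 10) : ℕ :=
  ∑ j : Fin n, 10 ^ (j : ℕ) * (x j : ℕ)

noncomputable def Omega (n : ℕ) : Finset (Fin n → Fin 10) :=
  Finset.univ.filter (fun x => ∃ k ≥ n, Dn n x % 10 ^ n = 2 ^ k % 10 ^ n)

open Nat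

theorem exists_ge_pow_eq_of_orderOf_eq_card {G : Type*} [Group G] [Finite G] {g : G}
    (hg : orderOf g = Nat.card G) (x : G) (N : ℕ) : ∃ k ≥ N, g ^ k = x := by
  have htop : Subgroup.zpowers g = ⊤ :=
    Subgroup.eq_top_of_card_eq _ (by rw [Nat.card_zpowers, hg])
  obtain ⟨k, rfl⟩ := mem_powers_iff_mem_zpowers.mpr (htop ▸ Subgroup.mem_top x)
  refine ⟨k + N * orderOf g, ?_, ?_⟩
  · exact le_add_left (Nat.le_mul_of_pos_right N (isOfFinOrder_of_finite g).orderOf_pos)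
  · rw [pow_add, mul_comm, pow_mul, pow_orderOf_eq_one, one_pow, mul_one]

theorem orderOf_two_zmod_five : orderOf (2 : ZMod 5) = 4 :=
  orderOf_eq_prime_pow (p := 2) (n := 1) (by decide) (by decide)

theorem orderOf_two_zmod_five_pow_succ (n : ℕ) :
    orderOf (2 : ZMod (5 ^ (n + 1))) = 4 * 5 ^ n := by
  have h16 : orderOf ((2 : ZMod (5 ^ (n + 1))) ^ 4) = 5 ^ n := by
    convert ZMod.orderOf_one_add_mul_prime (by norm_num : Nat.Prime 5) (by norm_num) 3
      (by norm_num) n using 2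
    norm_num
  have h4 : 4 ∣ orderOf (2 : ZMod (5 ^ (n + 1))) := by
    have := orderOf_map_dvd
      (ZMod.castHom (dvd_pow_self 5 n.succ_ne_zero) (ZMod 5) : ZMod (5 ^ (n + 1)) →* ZMod 5) 2
    rwa [MonoidHom.coe_coe, map_ofNat, orderOf_two_zmod_five] at this
  rw [orderOf_pow' _ (by norm_num), Nat.gcd_eq_right h4] at h16
  rw [← h16, Nat.mul_div_cancel' h4]

theorem orderOf_two_zmod_five_pow (n : ℕ) : orderOf (2 : ZMod (5 ^ n)) = φ (5 ^ n) := by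
  cases n with
  | zero => simp only [pow_zero, totient_one, orderOf_eq_one_iff]; decide
  | succ n =>
    rw [orderOf_two_zmod_five_pow_succ, totient_prime_pow_succ (by norm_num)]
    ring

theorem exists_ge_two_pow_modEq_five_pow (n : ℕ) {a : ℕ} (ha : ¬ 5 ∣ a) (N : ℕ) :
    ∃ k ≥ N, 2 ^ k ≡ a [MOD 5 ^ n] := by
  have hcop : a.Coprime (5 ^ n) :=
    ((Nat.Prime.coprime_iff_not_dvd (by norm_num)).mpr ha).symm.pow_right n
  have hcop2 : Coprime 2 (5 ^ n) := Coprime.pow_right n (by norm_num)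
  have hgen : orderOf (ZMod.unitOfCoprime 2 hcop2) = Nat.card (ZMod (5 ^ n))ˣ := by
    rw [← orderOf_units, ZMod.coe_unitOfCoprime, Nat.cast_ofNat, orderOf_two_zmod_five_pow,
      Nat.card_eq_fintype_card, ZMod.card_units_eq_totient]
  obtain ⟨k, hkN, hk⟩ := exists_ge_pow_eq_of_orderOf_eq_card hgen (ZMod.unitOfCoprime a hcop) N
  refine ⟨k, hkN, (ZMod.natCast_eq_natCast_iff _ _ _).mp ?_⟩
  simpa using congrArg Units.val hk

theorem Dn_mod_ten {n : ℕ} (hn : 1 ≤ n) (x : Fin n → Fin 10) :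
    Dn n x % 10 = x ⟨0, hn⟩ := by
  obtain ⟨m, rfl⟩ : ∃ m, n = m + 1 := ⟨n - 1, by omega⟩
  rw [Dn, Fin.sum_univ_succ]
  simp only [Fin.val_zero, pow_zero, one_mul, Fin.val_succ, pow_succ, mul_comm _ 10, mul_assoc,
    ← Finset.mul_sum, Nat.add_mul_mod_self_left]
  exact Nat.mod_eq_of_lt (x 0).isLt

theorem mem_Omega_of_mod (n : ℕ) (hn : 1 ≤ n) (ω : Fin n → Fin 10)
    (h2 : Dn n ω % 2 ^ n = 0) (h1 : ((ω ⟨0, hn⟩ : ℕ)) ∈ ({2, 4, 6, 8} : Set ℕ)) :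
    ω ∈ Omega n := by
  have h5 : ¬ 5 ∣ Dn n ω := by
    have := Dn_mod_ten hn ω
    simp only [Set.mem_insert_iff, Set.mem_singleton_iff] at h1
    omega
  obtain ⟨k, hkn, hk5⟩ := exists_ge_two_pow_modEq_five_pow n h5 n
  have hk2 : 2 ^ k ≡ Dn n ω [MOD 2 ^ n] :=
    (Nat.modEq_zero_iff_dvd.mpr (pow_dvd_pow 2 hkn)).trans h2.symm
  have hk10 : 2 ^ k ≡ Dn n ω [MOD 10 ^ n] := by
    rw [show 10 ^ n = 2 ^ n * 5 ^ n by norm_num [← mul_pow]]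
    exact (modEq_and_modEq_iff_modEq_mul (Coprime.pow n n (by norm_num))).mp ⟨hk2, hk5⟩
  simpa [Omega] using ⟨k, hkn, hk10.symm⟩
end

section
/- Let h : {0,…,9} → [0,∞) be not identically zero, and set E = ∑_{k=0}^4 h(2k), O = ∑_{k=0}^4 h(2k+1), S = max{E, O}. Then for every n ≥ 2, ∑_{ω ∈ Ω_n} ∏_{j=1}^n h(ω_j) ≤ (h(2)+h(4)+h(6)+h(8)) · S^{n-1}. -/
open scoped Classical

/-!
Dropping the last digit of `x ∈ Ω_{n+1}` gives `x' ∈ Ω_n`, and `D_{n+1}(x) = D_n(x') + 10^n d`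
with `d` the last digit. Since `2^{n+1}` divides `D_{n+1}(x)` and `10^n d = 2^n 5^n d`, the parity
of `d` is forced by `x'`. So the weighted sum over `Ω_{n+1}` is at most the sum over `Ω_n` times
the sum of `h` over one parity class of digits, which is at most `S`. For the base case, a power
`2^k` with `k ≥ 1` ends in `2, 4, 6` or `8`.
-/

lemma mod_two_eq_of_two_pow_succ_dvd {a d n : ℕ} (h : 2 ^ (n + 1) ∣ a + 10 ^ n * d) :
    d % 2 = a / 2 ^ n % 2 := by
  have h10 : 10 ^ n = 2 ^ n * 5 ^ n := by rw [← mul_pow]; norm_num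
  obtain ⟨q, rfl⟩ : 2 ^ n ∣ a := by
    refine (Nat.dvd_add_left ?_).mp (dvd_trans (pow_dvd_pow 2 n.le_succ) h)
    exact ⟨5 ^ n * d, by rw [h10]; ring⟩
  have hsplit : 2 ^ n * q + 10 ^ n * d = 2 ^ n * (q + 5 ^ n * d) := by rw [h10]; ring
  rw [hsplit, pow_succ] at h
  have heven : Even (q + 5 ^ n * d) :=
    even_iff_two_dvd.mpr (Nat.dvd_of_mul_dvd_mul_left (by positivity) h)
  rw [Nat.even_add, Nat.even_mul, Nat.even_pow] at heven
  simp only [Nat.even_iff] at heven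
  rw [Nat.mul_div_cancel_left _ (by positivity)]
  omega

lemma two_pow_mod_ten_mem {k : ℕ} (hk : 1 ≤ k) : 2 ^ k % 10 ∈ ({2, 4, 6, 8} : Finset ℕ) := by
  induction k, hk using Nat.le_induction with
  | base => decide
  | succ m _ ih =>
    simp only [Finset.mem_insert, Finset.mem_singleton] at ih ⊢
    rw [pow_succ]
    omega

section Omega

variable {n : ℕ}

lemma Dn_succ (x : Fin (n + 1) → Fin 10) :
    Dn (n + 1) x = Dn n (Fin.init x) + 10 ^ n * x (Fin.last n) := by
  simp [Dn, Fin.sum_univ_castSucc, Fin.init]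

lemma Dn_one (x : Fin 1 → Fin 10) : Dn 1 x = x 0 := by
  simp [Dn]

lemma mem_Omega_iff {x : Fin n → Fin 10} :
    x ∈ Omega n ↔ ∃ k ≥ n, Dn n x ≡ 2 ^ k [MOD 10 ^ n] := by
  simp [Omega, Nat.ModEq]

lemma two_pow_dvd_Dn_of_mem_Omega {x : Fin n → Fin 10} (hx : x ∈ Omega n) :
    2 ^ n ∣ Dn n x := by
  obtain ⟨k, hk, hmod⟩ := mem_Omega_iff.mp hx
  have h2 : Dn n x ≡ 2 ^ k [MOD 2 ^ n] := hmod.of_dvd (pow_dvd_pow_of_dvd (by norm_num) n)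
  exact Nat.modEq_zero_iff_dvd.mp (h2.trans (pow_dvd_pow 2 hk).modEq_zero_nat)

lemma init_mem_Omega {x : Fin (n + 1) → Fin 10} (hx : x ∈ Omega (n + 1)) :
    Fin.init x ∈ Omega n := by
  obtain ⟨k, hk, hmod⟩ := mem_Omega_iff.mp hx
  refine mem_Omega_iff.mpr ⟨k, by omega, ?_⟩
  have hmod' := hmod.of_dvd (pow_dvd_pow 10 n.le_succ)
  rwa [Dn_succ, Nat.add_modulus_mul_modEq_iff] at hmod'

noncomputable def nextDigitParity (y : Fin n → Fin 10) : ℕ :=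
  Dn n y / 2 ^ n % 2

lemma last_mod_two_of_mem_Omega {x : Fin (n + 1) → Fin 10} (hx : x ∈ Omega (n + 1)) :
    (x (Fin.last n) : ℕ) % 2 = nextDigitParity (Fin.init x) :=
  mod_two_eq_of_two_pow_succ_dvd (Dn_succ x ▸ two_pow_dvd_Dn_of_mem_Omega hx)

noncomputable def admissibleExtensions (n : ℕ) : Finset ((Fin n → Fin 10) × Fin 10) :=
  (Omega n ×ˢ Finset.univ).filter (fun yd => (yd.2 : ℕ) % 2 = nextDigitParity yd.1)

lemma Omega_succ_subset :
    Omega (n + 1) ⊆ (admissibleExtensions n).image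
      (fun yd => (Fin.snoc yd.1 yd.2 : Fin (n + 1) → Fin 10)) := fun x hx =>
  Finset.mem_image.mpr ⟨(Fin.init x, x (Fin.last n)),
    by simp [admissibleExtensions, init_mem_Omega hx, last_mod_two_of_mem_Omega hx],
    Fin.snoc_init_self x⟩

lemma Omega_one_subset :
    Omega 1 ⊆ ({2, 4, 6, 8} : Finset (Fin 10)).image (fun d _ => d) := by
  intro x hx
  obtain ⟨k, hk, hmod⟩ := mem_Omega_iff.mp hx
  rw [Nat.ModEq, Dn_one, pow_one] at hmod
  have hval : (x 0 : ℕ) % 10 ∈ ({2, 4, 6, 8} : Finset ℕ) := hmod ▸ two_pow_mod_ten_mem hk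
  refine Finset.mem_image.mpr ⟨x 0, ?_, funext fun i => by rw [Subsingleton.elim i 0]⟩
  generalize x 0 = d at hval ⊢
  revert d
  decide

end Omega

section WeightedSum

variable (h : ℕ → ℝ)

noncomputable def weightedSum (n : ℕ) : ℝ :=
  ∑ ω ∈ Omega n, ∏ j : Fin n, h (ω j)

noncomputable def maxParitySum : ℝ :=
  max (∑ k ∈ Finset.range 5, h (2 * k)) (∑ k ∈ Finset.range 5, h (2 * k + 1))

variable {h}

lemma maxParitySum_nonneg (hpos : ∀ j < 10, 0 ≤ h j) : 0 ≤ maxParitySum h :=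
  le_max_of_le_left (Finset.sum_nonneg fun k hk => hpos _ (by simp at hk; omega))

lemma sum_filter_mod_two_le_maxParitySum {b : ℕ} (hb : b < 2) :
    ∑ d ∈ Finset.univ.filter (fun d : Fin 10 => (d : ℕ) % 2 = b), h d ≤ maxParitySum h := by
  interval_cases b
  · refine le_of_eq_of_le ?_ (le_max_left _ _)
    simp [Finset.sum_filter, Fin.sum_univ_succ, Finset.sum_range_succ, add_assoc]
  · refine le_of_eq_of_le ?_ (le_max_right _ _)
    simp [Finset.sum_filter, Fin.sum_univ_succ, Finset.sum_range_succ, add_assoc]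

lemma prod_digits_nonneg (hpos : ∀ j < 10, 0 ≤ h j) {n : ℕ} (x : Fin n → Fin 10) :
    0 ≤ ∏ j, h (x j) :=
  Finset.prod_nonneg fun j _ => hpos _ (x j).is_lt

lemma weightedSum_one_le (hpos : ∀ j < 10, 0 ≤ h j) :
    weightedSum h 1 ≤ h 2 + h 4 + h 6 + h 8 := by
  calc weightedSum h 1
      ≤ ∑ x ∈ ({2, 4, 6, 8} : Finset (Fin 10)).image (fun d _ => d), ∏ j : Fin 1, h (x j) :=
        Finset.sum_le_sum_of_subset_of_nonneg Omega_one_subset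
          fun x _ _ => prod_digits_nonneg hpos x
    _ ≤ ∑ d ∈ ({2, 4, 6, 8} : Finset (Fin 10)), ∏ _j : Fin 1, h d :=
        Finset.sum_image_le_of_nonneg fun x _ => prod_digits_nonneg hpos x
    _ = h 2 + h 4 + h 6 + h 8 := by
        rw [Finset.sum_insert (by decide), Finset.sum_insert (by decide),
          Finset.sum_insert (by decide), Finset.sum_singleton]
        simp [add_assoc]

lemma weightedSum_succ_le (hpos : ∀ j < 10, 0 ≤ h j) (n : ℕ) :
    weightedSum h (n + 1) ≤ weightedSum h n * maxParitySum h := by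
  calc weightedSum h (n + 1)
      ≤ ∑ x ∈ (admissibleExtensions n).image
          (fun yd => (Fin.snoc yd.1 yd.2 : Fin (n + 1) → Fin 10)), ∏ j, h (x j) :=
        Finset.sum_le_sum_of_subset_of_nonneg Omega_succ_subset
          fun x _ _ => prod_digits_nonneg hpos x
    _ ≤ ∑ yd ∈ admissibleExtensions n,
          ∏ j, h ((Fin.snoc yd.1 yd.2 : Fin (n + 1) → Fin 10) j) :=
        Finset.sum_image_le_of_nonneg fun x _ => prod_digits_nonneg hpos x
    _ = ∑ y ∈ Omega n, (∏ j, h (y j)) *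
          ∑ d ∈ Finset.univ.filter (fun d : Fin 10 => (d : ℕ) % 2 = nextDigitParity y), h d := by
        rw [admissibleExtensions, Finset.sum_filter, Finset.sum_product]
        refine Finset.sum_congr rfl fun y _ => ?_
        rw [Finset.sum_filter, Finset.mul_sum]
        refine Finset.sum_congr rfl fun d _ => ?_
        simp [Fin.prod_univ_castSucc]
    _ ≤ ∑ y ∈ Omega n, (∏ j, h (y j)) * maxParitySum h :=
        Finset.sum_le_sum fun y _ => mul_le_mul_of_nonneg_left
          (sum_filter_mod_two_le_maxParitySum (Nat.mod_lt _ two_pos)) (prod_digits_nonneg hpos y)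
    _ = weightedSum h n * maxParitySum h := (Finset.sum_mul ..).symm

lemma weightedSum_succ_le_pow (hpos : ∀ j < 10, 0 ≤ h j) (m : ℕ) :
    weightedSum h (m + 1) ≤ (h 2 + h 4 + h 6 + h 8) * maxParitySum h ^ m := by
  induction m with
  | zero => simpa using weightedSum_one_le hpos
  | succ m ih =>
    rw [pow_succ, ← mul_assoc]
    exact (weightedSum_succ_le hpos (m + 1)).trans
      (mul_le_mul_of_nonneg_right ih (maxParitySum_nonneg hpos))

end WeightedSum

theorem weighted_sum_upper_bound_general (h : ℕ → ℝ) (hpos : ∀ j < 10, 0 ≤ h j)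
    (n : ℕ) (hn : 2 ≤ n) :
    (∑ ω ∈ Omega n, ∏ j : Fin n, h (ω j))
      ≤ (h 2 + h 4 + h 6 + h 8) *
          (max (∑ k ∈ Finset.range 5, h (2 * k)) (∑ k ∈ Finset.range 5, h (2 * k + 1)))
            ^ (n - 1) := by
  obtain ⟨m, rfl⟩ : ∃ m, n = m + 1 := ⟨n - 1, by omega⟩
  exact weightedSum_succ_le_pow hpos m

theorem weighted_sum_upper_bound (h : ℕ → ℝ) (hpos : ∀ j < 10, 0 ≤ h j)
    (hne : ∃ j < 10, h j ≠ 0) (n : ℕ) (hn : 2 ≤ n) :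
    (∑ ω ∈ Omega n, ∏ j : Fin n, h (ω j))
      ≤ (h 2 + h 4 + h 6 + h 8) *
          (max (∑ k ∈ Finset.range 5, h (2 * k)) (∑ k ∈ Finset.range 5, h (2 * k + 1)))
            ^ (n - 1) :=
  weighted_sum_upper_bound_general h hpos n hn
end

section
/- Let m ≥ 1 and let h_1,…,h_m : {0,…,9} → ℂ with E_j = ∑_{k=0}^4 h_j(2k) = ∑_{k=0}^4 h_j(2k+1) for all j. If each h_j has equal even and odd sums E_j, then for every 0 ≤ t < 2^m, ∑ { ∏_{j=1}^m h_j(x_j) : x ∈ {0,…,9}^m, D_m(x) ≡ t (mod 2^m) } = ∏_{j=1}^m E_j. -/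
open scoped Classical

/-!
Induct on `m`, peeling off the lowest digit: `Dn (m + 1) (d, x) = d + 10 * Dn m x`. The
congruence `d + 10 * N ≡ t [MOD 2 ^ (m + 1)]` forces `d ≡ t [MOD 2]`, and then, since `5` is a
unit modulo `2 ^ m`, it confines `N` to a single residue class modulo `2 ^ m`. By induction every
digit `d` of the parity of `t` thus contributes `h₁ d * ∏_{j ≥ 2} E_j`, and the digits of either
parity sum to `E₁` by balance.
-/

theorem ZMod.exists_lt_forall_units_mul_natCast_add_eq_zero_iff {n : ℕ} [NeZero n]
    (u : (ZMod n)ˣ) (c : ZMod n) : ∃ r < n, ∀ N : ℕ, (u : ZMod n) * N + c = 0 ↔ N % n = r := by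
  refine ⟨(-c * ↑u⁻¹ : ZMod n).val, ZMod.val_lt _, fun N => ?_⟩
  rw [← ZMod.val_natCast, (ZMod.val_injective n).eq_iff, add_eq_zero_iff_eq_neg,
    Units.eq_mul_inv_iff_mul_eq, mul_comm]

theorem exists_lt_forall_add_ten_mul_mod_eq_iff (m d t : ℕ) (ht : t < 2 ^ (m + 1))
    (hdt : d % 2 = t % 2) :
    ∃ r < 2 ^ m, ∀ N : ℕ, (d + 10 * N) % 2 ^ (m + 1) = t ↔ N % 2 ^ m = r := by
  obtain ⟨e, he⟩ : (2 : ℤ) ∣ d - t := (Int.natCast_modEq_iff.mpr hdt.symm).dvd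
  have h5 : Nat.Coprime 5 (2 ^ m) := Nat.Coprime.pow_right m (by norm_num)
  obtain ⟨r, hr, hiff⟩ := ZMod.exists_lt_forall_units_mul_natCast_add_eq_zero_iff
    (ZMod.unitOfCoprime 5 h5) (e : ZMod (2 ^ m))
  refine ⟨r, hr, fun N => ?_⟩
  calc (d + 10 * N) % 2 ^ (m + 1) = t
      ↔ (t : ℤ) ≡ ((d + 10 * N : ℕ) : ℤ) [ZMOD ((2 ^ (m + 1) : ℕ) : ℤ)] := by
        rw [Int.natCast_modEq_iff, Nat.ModEq, Nat.mod_eq_of_lt ht, eq_comm]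
    _ ↔ 2 * ((2 ^ m : ℕ) : ℤ) ∣ 2 * (5 * N + e) := by
        rw [Int.modEq_iff_dvd, pow_succ', Nat.cast_mul]
        congr! 1
        push_cast
        linear_combination he
    _ ↔ N % 2 ^ m = r := by
        rw [mul_dvd_mul_iff_left two_ne_zero, ← hiff, ← ZMod.intCast_zmod_eq_zero_iff_dvd]
        push_cast
        rfl

theorem Dn_cons {m : ℕ} (d : Fin 10) (x : Fin m → Fin 10) :
    Dn (m + 1) (Fin.cons d x) = d + 10 * Dn m x := by
  simp only [Dn, Fin.sum_univ_succ, Fin.cons_zero, Fin.cons_succ, Fin.val_zero, pow_zero,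
    one_mul, Fin.val_succ, Finset.mul_sum, pow_succ]
  congr 1
  exact Finset.sum_congr rfl fun i _ => by ring

theorem sum_fin_ten_ite_mod_two_eq (f : ℕ → ℂ)
    (hf : ∑ k ∈ Finset.range 5, f (2 * k) = ∑ k ∈ Finset.range 5, f (2 * k + 1)) (t : ℕ) :
    ∑ d : Fin 10, (if (d : ℕ) % 2 = t % 2 then f d else 0) = ∑ k ∈ Finset.range 5, f (2 * k) := by
  simp only [Finset.sum_range_succ, Finset.sum_range_zero, zero_add] at hf ⊢
  rcases Nat.mod_two_eq_zero_or_one t with ht | ht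
  · simp [ht, Fin.sum_univ_succ]; ring
  · simp [ht, Fin.sum_univ_succ]; linear_combination -hf

theorem sum_filter_Dn_mod_eq_prod (m : ℕ) (g : Fin m → ℕ → ℂ)
    (hg : ∀ j, ∑ k ∈ Finset.range 5, g j (2 * k) = ∑ k ∈ Finset.range 5, g j (2 * k + 1))
    (t : ℕ) (ht : t < 2 ^ m) :
    ∑ x ∈ Finset.univ.filter (fun x : Fin m → Fin 10 => Dn m x % 2 ^ m = t), ∏ j, g j (x j)
      = ∏ j, ∑ k ∈ Finset.range 5, g j (2 * k) := by
  induction m generalizing t with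
  | zero =>
    obtain rfl : t = 0 := by simpa using ht
    simp [Dn]
  | succ m ih =>
    have hfiber (d : Fin 10) :
        ∑ x ∈ Finset.univ.filter
            (fun x : Fin m → Fin 10 => (d + 10 * Dn m x) % 2 ^ (m + 1) = t),
          ∏ j, g j.succ (x j)
        = if (d : ℕ) % 2 = t % 2 then ∏ j : Fin m, ∑ k ∈ Finset.range 5, g j.succ (2 * k)
          else 0 := by
      split_ifs with hdt
      · obtain ⟨r, hr, hiff⟩ := exists_lt_forall_add_ten_mul_mod_eq_iff m d t ht hdt
        simp_rw [hiff]
        exact ih (fun j => g j.succ) (fun j => hg j.succ) r hr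
      · refine Finset.sum_eq_zero fun x hx => absurd ?_ hdt
        rw [← (Finset.mem_filter.1 hx).2, Nat.mod_mod_of_dvd _ (dvd_pow_self 2 m.succ_ne_zero)]
        omega
    calc ∑ x ∈ Finset.univ.filter
            (fun x : Fin (m + 1) → Fin 10 => Dn (m + 1) x % 2 ^ (m + 1) = t), ∏ j, g j (x j)
        = ∑ d : Fin 10, g 0 d * ∑ x ∈ Finset.univ.filter
            (fun x : Fin m → Fin 10 => (d + 10 * Dn m x) % 2 ^ (m + 1) = t),
              ∏ j, g j.succ (x j) := by
          simp_rw [Finset.sum_filter, Finset.mul_sum, mul_ite, mul_zero]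
          rw [← (Fin.consEquiv _).sum_comp, Fintype.sum_prod_type]
          simp [Fin.consEquiv, Dn_cons, Fin.prod_univ_succ]
      _ = ∏ j, ∑ k ∈ Finset.range 5, g j (2 * k) := by
          rw [Fin.prod_univ_succ, ← sum_fin_ten_ite_mod_two_eq _ (hg 0) t, Finset.sum_mul]
          simp_rw [hfiber, mul_ite, ite_mul, mul_zero, zero_mul]

theorem uniform_vector_general (m : ℕ) (h : ℕ → ℕ → ℂ)
    (hbal : ∀ j ∈ Finset.Icc 1 m,
      ∑ k ∈ Finset.range 5, h j (2 * k) = ∑ k ∈ Finset.range 5, h j (2 * k + 1)) :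
    ∀ t < 2 ^ m,
      (∑ x ∈ Finset.univ.filter (fun x : Fin m → Fin 10 => Dn m x % 2 ^ m = t),
          ∏ j : Fin m, h ((j : ℕ) + 1) (x j))
        = ∏ j ∈ Finset.Icc 1 m, ∑ k ∈ Finset.range 5, h j (2 * k) := by
  intro t ht
  have hbal' (j : Fin m) := hbal (j + 1) (Finset.mem_Icc.2 ⟨by omega, j.isLt⟩)
  rw [sum_filter_Dn_mod_eq_prod m (fun j => h (j + 1)) hbal' t ht,
    Fin.prod_univ_eq_prod_range (fun j => ∑ k ∈ Finset.range 5, h (j + 1) (2 * k)),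
    Finset.range_eq_Ico, Finset.prod_Ico_add' (fun j => ∑ k ∈ Finset.range 5, h j (2 * k))]
  rfl

theorem uniform_vector (m : ℕ) (hm : 1 ≤ m) (h : ℕ → ℕ → ℂ)
    (hbal : ∀ j ∈ Finset.Icc 1 m,
      ∑ k ∈ Finset.range 5, h j (2 * k) = ∑ k ∈ Finset.range 5, h j (2 * k + 1)) :
    ∀ t < 2 ^ m,
      (∑ x ∈ Finset.univ.filter (fun x : Fin m → Fin 10 => Dn m x % 2 ^ m = t),
          ∏ j : Fin m, h ((j : ℕ) + 1) (x j))
        = ∏ j ∈ Finset.Icc 1 m, ∑ k ∈ Finset.range 5, h j (2 * k) :=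
  uniform_vector_general m h hbal
end
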